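/- Let (f,M) be an integer polymatroid, and for each i∈M let (r_i,P_i) be a matroid of rank r_i(P_i)=f({i}), where the ground sets P_i are pairwise disjoint. Let N be the union of the P_i. Then there exists a matroid (g,N) such that g restricted to subsets of P_i equals r_i for every i∈M, and (f,M) is the factor of (g,N) under the map sending each element of P_i to i; that is, f(A)=g(⋃_{i∈A}P_i) for all A⊆M. -/

import Mathlib

open scoped Classical

/-- A polymatroid on the finite ground set `M`: `f` is zero on the empty set,
nonnegative, monotone and submodular on subsets of `M`. -/
def IsPolymatroid {α : Type*} [DecidableEq α] (M : Finset α) (f : Finset α → ℝ) : Prop :=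
  f ∅ = 0 ∧
  (∀ A, A ⊆ M → 0 ≤ f A) ∧
  (∀ A B, A ⊆ B → B ⊆ M → f A ≤ f B) ∧
  (∀ A B, A ⊆ M → B ⊆ M → f (A ∪ B) + f (A ∩ B) ≤ f A + f B)

/-- `F` is a flat of the polymatroid `(f, M)`: every proper superset inside `M`
has strictly larger rank. -/
def IsFlat {α : Type*} [DecidableEq α] (M : Finset α) (f : Finset α → ℝ) (F : Finset α) : Prop :=
  F ⊆ M ∧ ∀ G, F ⊂ G → G ⊆ M → f F < f G

/-- The modular defect of a pair of subsets. -/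
def modularDefect {α : Type*} [DecidableEq α] (f : Finset α → ℝ) (A B : Finset α) : ℝ :=
  f A + f B - f (A ∩ B) - f (A ∪ B)

/-- A modular cut: a collection of flats, closed upwards among flats,
and closed under intersections of modular pairs. -/
def IsModularCut {α : Type*} [DecidableEq α] (M : Finset α) (f : Finset α → ℝ)
    (𝓜 : Set (Finset α)) : Prop :=
  (∀ F ∈ 𝓜, IsFlat M f F) ∧
  (∀ F₁ ∈ 𝓜, ∀ F₂, IsFlat M f F₂ → F₁ ⊆ F₂ → F₂ ∈ 𝓜) ∧
  (∀ F₁ ∈ 𝓜, ∀ F₂ ∈ 𝓜, modularDefect f F₁ F₂ = 0 → F₁ ∩ F₂ ∈ 𝓜)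

/-- A modular cut is principal if it is empty or the intersection of all of its
elements (taken inside the ground set `M`) is one of its elements. -/
def IsPrincipal {α : Type*} [DecidableEq α] (M : Finset α) (𝓜 : Set (Finset α)) : Prop :=
  𝓜 = ∅ ∨ (M.filter fun x => ∀ F ∈ 𝓜, x ∈ F) ∈ 𝓜

/-- `(g, N)` is an extension of the polymatroid `(f, M)`. -/
def IsExtension {α : Type*} [DecidableEq α] (M : Finset α) (f : Finset α → ℝ)
    (N : Finset α) (g : Finset α → ℝ) : Prop :=
  M ⊆ N ∧ IsPolymatroid N g ∧ ∀ A, A ⊆ M → g A = f A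

/-- `h` is an amalgam of the two extensions `(g₁, N₁)` and `(g₂, N₂)`. -/
def IsAmalgam {α : Type*} [DecidableEq α] (N₁ : Finset α) (g₁ : Finset α → ℝ)
    (N₂ : Finset α) (g₂ : Finset α → ℝ) (h : Finset α → ℝ) : Prop :=
  IsPolymatroid (N₁ ∪ N₂) h ∧ (∀ A, A ⊆ N₁ → h A = g₁ A) ∧ (∀ A, A ⊆ N₂ → h A = g₂ A)

/-- A polymatroid is sticky if every two extensions intersecting exactly
in the ground set have an amalgam. -/
def Sticky {α : Type*} [DecidableEq α] (M : Finset α) (f : Finset α → ℝ) : Prop :=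
  ∀ N₁ g₁ N₂ g₂, IsExtension M f N₁ g₁ → IsExtension M f N₂ g₂ → N₁ ∩ N₂ = M →
    ∃ h, IsAmalgam N₁ g₁ N₂ g₂ h

/-- A matroid (as a polymatroid): an integer-valued polymatroid whose rank on
every singleton of the ground set is `0` or `1`. -/
def IsMatroidRk {β : Type*} [DecidableEq β] (N : Finset β) (g : Finset β → ℝ) : Prop :=
  IsPolymatroid N g ∧ (∀ A, A ⊆ N → ∃ n : ℤ, g A = (n : ℝ)) ∧
  (∀ a ∈ N, g {a} = 0 ∨ g {a} = 1)

/-!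
The matroid is `g = liftRank M f P r`, `g X = min_{A ⊆ M} (f A + ∑_{i ∈ M \ A} rᵢ (X ∩ Pᵢ))`:
the cheapest way to bound the rank of `X` is to pay `f A` for the blocks in `A` and `rᵢ` for
the parts of `X` in the other blocks. Submodularity of `g` follows from that of `f` and of the
`rᵢ` by combining the optimal `A` for `X` and `B` for `Y` into `A ∪ B` and `A ∩ B`. On a subset
of `Pᵢ` the minimum is `rᵢ`, because `rᵢ (Pᵢ) ≤ f {i}`; on `⋃_{i ∈ A} Pᵢ` it is `f A`, because
`f` is subadditive and `f {i} ≤ rᵢ (Pᵢ)`.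
-/

open Finset

namespace IsPolymatroid

variable {α : Type*} [DecidableEq α] {M : Finset α} {f : Finset α → ℝ}

theorem map_empty (hf : IsPolymatroid M f) : f ∅ = 0 := hf.1

theorem nonneg (hf : IsPolymatroid M f) {A : Finset α} (hA : A ⊆ M) : 0 ≤ f A := hf.2.1 A hA

theorem mono (hf : IsPolymatroid M f) {A B : Finset α} (hAB : A ⊆ B) (hB : B ⊆ M) :
    f A ≤ f B :=
  hf.2.2.1 A B hAB hB

theorem submodular (hf : IsPolymatroid M f) {A B : Finset α} (hA : A ⊆ M) (hB : B ⊆ M) :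
    f (A ∪ B) + f (A ∩ B) ≤ f A + f B :=
  hf.2.2.2 A B hA hB

theorem union_le_add_sum_singleton (hf : IsPolymatroid M f) {C D : Finset α} (hC : C ⊆ M)
    (hD : D ⊆ M) : f (C ∪ D) ≤ f C + ∑ i ∈ D, f {i} := by
  induction D using Finset.induction_on with
  | empty => simp
  | insert a D ha ih =>
    have hD' : D ⊆ M := (subset_insert a D).trans hD
    have ha' : {a} ⊆ M := singleton_subset_iff.2 (hD (mem_insert_self a D))
    have hCD : C ∪ D ⊆ M := union_subset hC hD'
    have hsub := hf.submodular hCD ha'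
    have hnn := hf.nonneg (A := (C ∪ D) ∩ {a}) (inter_subset_left.trans hCD)
    rw [union_insert, insert_eq, union_comm, sum_insert ha]
    linarith [ih hD']

theorem ite_union_add_ite_inter_le (hf : IsPolymatroid M f) {X Y : Finset α} (hX : X ⊆ M)
    (hY : Y ⊆ M) {ι : Type*} [DecidableEq ι] (i : ι) (A B : Finset ι) :
    (if i ∉ A ∪ B then f (X ∪ Y) else 0) + (if i ∉ A ∩ B then f (X ∩ Y) else 0) ≤
      (if i ∉ A then f X else 0) + (if i ∉ B then f Y else 0) := by
  by_cases hA : i ∈ A <;> by_cases hB : i ∈ B <;> simp [hA, hB]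
  · exact hf.mono inter_subset_right hY
  · exact hf.mono inter_subset_left hX
  · exact hf.submodular hX hY

end IsPolymatroid

theorem sum_rank_inter_of_subset {α β : Type*} [DecidableEq β] {M : Finset α}
    {P : α → Finset β} {r : α → Finset β → ℝ} (hr : ∀ i ∈ M, IsPolymatroid (P i) (r i))
    (hdisj : ∀ i ∈ M, ∀ j ∈ M, i ≠ j → Disjoint (P i) (P j)) {i : α} (hi : i ∈ M)
    {X : Finset β} (hX : X ⊆ P i) : ∑ j ∈ M, r j (X ∩ P j) = r i X := by
  rw [sum_eq_single_of_mem i hi fun j hj hji => ?_, inter_eq_left.2 hX]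
  have hXj : Disjoint X (P j) := (hdisj i hi j hj hji.symm).mono_left hX
  rw [disjoint_iff_inter_eq_empty.1 hXj, (hr j hj).map_empty]

section LiftRank

variable {α β : Type*} [DecidableEq α] [DecidableEq β]
  (M : Finset α) (f : Finset α → ℝ) (P : α → Finset β) (r : α → Finset β → ℝ)

noncomputable def liftRank (X : Finset β) : ℝ :=
  M.powerset.inf' ⟨∅, empty_mem_powerset M⟩ fun A => f A + ∑ i ∈ M \ A, r i (X ∩ P i)

theorem liftRank_le {A : Finset α} (hA : A ⊆ M) (X : Finset β) :
    liftRank M f P r X ≤ f A + ∑ i ∈ M \ A, r i (X ∩ P i) :=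
  inf'_le _ (mem_powerset.2 hA)

theorem exists_liftRank_eq (X : Finset β) :
    ∃ A ⊆ M, liftRank M f P r X = f A + ∑ i ∈ M \ A, r i (X ∩ P i) := by
  obtain ⟨A, hA, h⟩ := exists_mem_eq_inf' ⟨∅, empty_mem_powerset M⟩
    fun A => f A + ∑ i ∈ M \ A, r i (X ∩ P i)
  exact ⟨A, mem_powerset.1 hA, h⟩

variable {M f P r}

theorem le_liftRank {X : Finset β} {c : ℝ}
    (h : ∀ A ⊆ M, c ≤ f A + ∑ i ∈ M \ A, r i (X ∩ P i)) : c ≤ liftRank M f P r X :=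
  le_inf' _ _ fun A hA => h A (mem_powerset.1 hA)

theorem sum_sdiff_rank_inter_nonneg (hr : ∀ i ∈ M, IsPolymatroid (P i) (r i))
    (A : Finset α) (X : Finset β) : 0 ≤ ∑ i ∈ M \ A, r i (X ∩ P i) :=
  sum_nonneg fun i hi => (hr i (mem_sdiff.1 hi).1).nonneg inter_subset_right

theorem liftRank_nonneg (hf : IsPolymatroid M f) (hr : ∀ i ∈ M, IsPolymatroid (P i) (r i))
    (X : Finset β) : 0 ≤ liftRank M f P r X :=
  le_liftRank fun A hA => add_nonneg (hf.nonneg hA) (sum_sdiff_rank_inter_nonneg hr A X)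

theorem liftRank_empty (hf : IsPolymatroid M f) (hr : ∀ i ∈ M, IsPolymatroid (P i) (r i)) :
    liftRank M f P r ∅ = 0 := by
  refine le_antisymm ?_ (liftRank_nonneg hf hr ∅)
  have hsum : ∑ i ∈ M \ ∅, r i (∅ ∩ P i) = 0 :=
    sum_eq_zero fun i hi => by rw [empty_inter, (hr i (mem_sdiff.1 hi).1).map_empty]
  have hle := liftRank_le M f P r (empty_subset M) ∅
  rwa [hf.map_empty, zero_add, hsum] at hle

theorem liftRank_mono (hr : ∀ i ∈ M, IsPolymatroid (P i) (r i)) {X Y : Finset β}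
    (hXY : X ⊆ Y) : liftRank M f P r X ≤ liftRank M f P r Y := by
  obtain ⟨A, hA, hY⟩ := exists_liftRank_eq M f P r Y
  rw [hY]
  refine (liftRank_le M f P r hA X).trans (add_le_add_right (sum_le_sum fun i hi => ?_) _)
  exact (hr i (mem_sdiff.1 hi).1).mono (inter_subset_inter hXY le_rfl) inter_subset_right

theorem liftRank_submodular (hf : IsPolymatroid M f)
    (hr : ∀ i ∈ M, IsPolymatroid (P i) (r i)) (X Y : Finset β) :
    liftRank M f P r (X ∪ Y) + liftRank M f P r (X ∩ Y) ≤
      liftRank M f P r X + liftRank M f P r Y := by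
  obtain ⟨A, hA, hX⟩ := exists_liftRank_eq M f P r X
  obtain ⟨B, hB, hY⟩ := exists_liftRank_eq M f P r Y
  have hsum : ∑ i ∈ M \ (A ∪ B), r i ((X ∪ Y) ∩ P i) + ∑ i ∈ M \ (A ∩ B), r i ((X ∩ Y) ∩ P i) ≤
      ∑ i ∈ M \ A, r i (X ∩ P i) + ∑ i ∈ M \ B, r i (Y ∩ P i) := by
    simp only [sdiff_eq_filter, sum_filter, ← sum_add_distrib]
    refine sum_le_sum fun i hi => ?_
    rw [union_inter_distrib_right, inter_inter_distrib_right]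
    exact (hr i hi).ite_union_add_ite_inter_le inter_subset_right inter_subset_right i A B
  rw [hX, hY]
  linarith [liftRank_le M f P r (union_subset hA hB) (X ∪ Y),
    liftRank_le M f P r (inter_subset_left.trans hA : A ∩ B ⊆ M) (X ∩ Y), hf.submodular hA hB]

theorem liftRank_isPolymatroid (hf : IsPolymatroid M f)
    (hr : ∀ i ∈ M, IsPolymatroid (P i) (r i)) (N : Finset β) :
    IsPolymatroid N (liftRank M f P r) :=
  ⟨liftRank_empty hf hr, fun X _ => liftRank_nonneg hf hr X, fun _ _ hXY _ => liftRank_mono hr hXY,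
    fun X Y _ _ => liftRank_submodular hf hr X Y⟩

theorem liftRank_of_subset (hf : IsPolymatroid M f) (hr : ∀ i ∈ M, IsPolymatroid (P i) (r i))
    (hdisj : ∀ i ∈ M, ∀ j ∈ M, i ≠ j → Disjoint (P i) (P j))
    (hrank : ∀ i ∈ M, r i (P i) ≤ f {i}) {i : α} (hi : i ∈ M) {X : Finset β} (hX : X ⊆ P i) :
    liftRank M f P r X = r i X := by
  refine le_antisymm ?_ (le_liftRank fun B hB => ?_)
  · have hle := liftRank_le M f P r (empty_subset M) X
    rwa [hf.map_empty, zero_add, sdiff_empty, sum_rank_inter_of_subset hr hdisj hi hX] at hle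
  have hsum := sum_sdiff_rank_inter_nonneg hr B X
  by_cases hiB : i ∈ B
  · have : r i X ≤ f B := calc
      r i X ≤ r i (P i) := (hr i hi).mono hX subset_rfl
      _ ≤ f {i} := hrank i hi
      _ ≤ f B := hf.mono (singleton_subset_iff.2 hiB) hB
    linarith
  · have : r i X ≤ ∑ j ∈ M \ B, r j (X ∩ P j) := calc
      r i X = r i (X ∩ P i) := by rw [inter_eq_left.2 hX]
      _ ≤ ∑ j ∈ M \ B, r j (X ∩ P j) :=
        single_le_sum (f := fun j => r j (X ∩ P j))
          (fun j hj => (hr j (mem_sdiff.1 hj).1).nonneg inter_subset_right)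
          (mem_sdiff.2 ⟨hi, hiB⟩)
    linarith [hf.nonneg hB]

theorem liftRank_biUnion (hf : IsPolymatroid M f) (hr : ∀ i ∈ M, IsPolymatroid (P i) (r i))
    (hdisj : ∀ i ∈ M, ∀ j ∈ M, i ≠ j → Disjoint (P i) (P j))
    (hrank : ∀ i ∈ M, f {i} ≤ r i (P i)) {A : Finset α} (hA : A ⊆ M) :
    liftRank M f P r (A.biUnion P) = f A := by
  refine le_antisymm ?_ (le_liftRank fun B hB => ?_)
  · have hsum : ∑ i ∈ M \ A, r i (A.biUnion P ∩ P i) = 0 := sum_eq_zero fun i hi => by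
      obtain ⟨hiM, hiA⟩ := mem_sdiff.1 hi
      have hdisj' : Disjoint (A.biUnion P) (P i) := (disjoint_biUnion_left _ _ _).2 fun j hj =>
        hdisj j (hA hj) i hiM (ne_of_mem_of_not_mem hj hiA)
      rw [disjoint_iff_inter_eq_empty.1 hdisj', (hr i hiM).map_empty]
    simpa [hsum] using liftRank_le M f P r hA (A.biUnion P)
  have hAB : A \ B ⊆ M := sdiff_subset.trans hA
  calc f A ≤ f (B ∪ A \ B) :=
        hf.mono (by rw [union_sdiff_self_eq_union]; exact subset_union_right)
          (union_subset hB hAB)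
    _ ≤ f B + ∑ i ∈ A \ B, f {i} := hf.union_le_add_sum_singleton hB hAB
    _ ≤ f B + ∑ i ∈ A \ B, r i (A.biUnion P ∩ P i) := by
        gcongr with i hi
        rw [inter_eq_right.2 (subset_biUnion_of_mem P (mem_sdiff.1 hi).1)]
        exact hrank i (hAB hi)
    _ ≤ f B + ∑ i ∈ M \ B, r i (A.biUnion P ∩ P i) :=
        add_le_add_right (sum_le_sum_of_subset_of_nonneg (sdiff_subset_sdiff hA subset_rfl)
          fun i hi _ => (hr i (mem_sdiff.1 hi).1).nonneg inter_subset_right) _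

theorem exists_int_liftRank_eq (hf : ∀ A ⊆ M, ∃ n : ℤ, f A = n)
    (hr : ∀ i ∈ M, ∀ X ⊆ P i, ∃ n : ℤ, r i X = n) (X : Finset β) :
    ∃ n : ℤ, liftRank M f P r X = n := by
  obtain ⟨A, hA, hX⟩ := exists_liftRank_eq M f P r X
  obtain ⟨m, hm⟩ := hf A hA
  obtain ⟨k, hk⟩ : ∃ k : ℤ, ∑ i ∈ M \ A, r i (X ∩ P i) = k :=
    sum_induction _ (fun x : ℝ => ∃ k : ℤ, x = k)
      (fun _ _ ⟨p, hp⟩ ⟨q, hq⟩ => ⟨p + q, by rw [hp, hq, Int.cast_add]⟩) ⟨0, Int.cast_zero.symm⟩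
      fun i hi => hr i (mem_sdiff.1 hi).1 _ inter_subset_right
  exact ⟨m + k, by rw [hX, hm, hk, Int.cast_add]⟩

end LiftRank

/-- Let `(f, M)` be an integer polymatroid and, for each `i ∈ M`,
let `(rᵢ, Pᵢ)` be a matroid of rank `f {i}` with pairwise disjoint ground sets.
Then on `N = ⋃ᵢ Pᵢ` there is a matroid `(g, N)` restricting to `rᵢ` on each `Pᵢ`
such that `(f, M)` is the factor of `(g, N)` under the map sending each element of
`Pᵢ` to `i`, i.e. `f A = g (⋃_{i ∈ A} Pᵢ)` for all `A ⊆ M`. -/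
theorem statement_10 {α β : Type*} [DecidableEq α] [DecidableEq β]
    (M : Finset α) (f : Finset α → ℝ) (hf : IsPolymatroid M f)
    (hint : ∀ A, A ⊆ M → ∃ n : ℤ, f A = (n : ℝ))
    (P : α → Finset β) (r : α → (Finset β → ℝ))
    (hdisj : ∀ i ∈ M, ∀ j ∈ M, i ≠ j → Disjoint (P i) (P j))
    (hmat : ∀ i ∈ M, IsMatroidRk (P i) (r i))
    (hrank : ∀ i ∈ M, r i (P i) = f {i}) :
    ∃ g : Finset β → ℝ,
      IsMatroidRk (M.biUnion P) g ∧
      (∀ i ∈ M, ∀ A, A ⊆ P i → g A = r i A) ∧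
      (∀ A, A ⊆ M → f A = g (A.biUnion P)) := by
  have hr : ∀ i ∈ M, IsPolymatroid (P i) (r i) := fun i hi => (hmat i hi).1
  have hres : ∀ i ∈ M, ∀ X, X ⊆ P i → liftRank M f P r X = r i X := fun i hi _ hX =>
    liftRank_of_subset hf hr hdisj (fun j hj => (hrank j hj).le) hi hX
  refine ⟨liftRank M f P r, ⟨liftRank_isPolymatroid hf hr _,
    fun X _ => exists_int_liftRank_eq hint (fun i hi => (hmat i hi).2.1) X, fun a ha => ?_⟩,
    hres, fun A hA => (liftRank_biUnion hf hr hdisj (fun i hi => (hrank i hi).ge) hA).symm⟩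
  obtain ⟨i, hi, hai⟩ := mem_biUnion.1 ha
  rw [hres i hi {a} (singleton_subset_iff.2 hai)]
  exact (hmat i hi).2.2 a hai
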